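/- Let p(·|μ,σ) be a location-scale family on ℝ^d generated by a mean-zero, identity-covariance probability measure f. For any probability measure q on ℝ^d with finite second moment, mean m, and covariance matrix Σ̂, letting σ̂ = (1/d)tr(Σ̂^{1/2}), we have W₂(p(·|μ,σ), q)² ≥ ‖m − μ‖² + d(σ̂ − σ)² = W₂(p(·|μ,σ), p(·|m,σ̂))². Hence the plug-in density p(·|m, σ̂) dominates q pointwise in Wasserstein loss. -/

import Mathlib

/-!
Fix a coupling `(X, Y)` of `p(·|μ,σ)` and `q`, and an orthonormal eigenbasis `(b_k)` of `Σ̂`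
with eigenvalues `λ_k`. The projections `U_k = ⟨b_k, X⟩` and `V_k = ⟨b_k, Y⟩` have standard
deviations `σ` and `√λ_k`, and Cauchy–Schwarz for their covariance gives
`E (U_k - V_k)² ≥ (E U_k - E V_k)² + (σ - √λ_k)²`. Summing over `k` (Parseval) bounds the cost
below by `‖m - μ‖² + ∑ₖ (√λ_k - σ)²`, and since `σ̂ = (1/d) ∑ₖ √λ_k` is the mean of the `√λ_k`,
`∑ₖ (√λ_k - σ)² ≥ d (σ̂ - σ)²`. For `q = p(·|m,σ̂)` the bound is attained by the coupling
`z ↦ (σ z + μ, σ̂ z + m)`.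
-/
open MeasureTheory ProbabilityTheory

/-- Squared L² Wasserstein distance on probability measures on ℝ^d (as `Fin d → ℝ`),
defined as the infimum over couplings of the expected squared Euclidean distance. -/
noncomputable def W2sq {d : ℕ} (p q : Measure (Fin d → ℝ)) : ℝ :=
  sInf {r : ℝ | ∃ μ : Measure ((Fin d → ℝ) × (Fin d → ℝ)),
    IsProbabilityMeasure μ ∧ μ.map Prod.fst = p ∧ μ.map Prod.snd = q ∧
    r = ∫ z, ∑ i, (z.1 i - z.2 i) ^ 2 ∂μ}

/-- L² Wasserstein distance. -/
noncomputable def W2 {d : ℕ} (p q : Measure (Fin d → ℝ)) : ℝ := Real.sqrt (W2sq p q)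


/-- The positive semidefinite square root of a positive semidefinite matrix
(`Matrix.PosSemidef.sqrt`, removed from Mathlib; restored with its old definition). -/
noncomputable def Matrix.PosSemidef.sqrt {n 𝕜 : Type*} [Fintype n] [DecidableEq n] [RCLike 𝕜]
    [PartialOrder 𝕜]     {A : Matrix n n 𝕜} (hA : A.PosSemidef) : Matrix n n 𝕜 :=
  hA.1.eigenvectorUnitary.1 * Matrix.diagonal ((↑) ∘ (√·) ∘ hA.1.eigenvalues) *
  (star hA.1.eigenvectorUnitary : Matrix n n 𝕜)

/-- Location-scale family generated by `f`: pushforward of `f` under `z ↦ σ z + μ`. -/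
noncomputable def locScaleFam {d : ℕ} (f : Measure (Fin d → ℝ)) (μ : Fin d → ℝ) (σ : ℝ) :
    Measure (Fin d → ℝ) := f.map (fun z => σ • z + μ)

open scoped Matrix Finset

namespace OrthonormalBasis

variable {ι : Type*} [Fintype ι] (b : OrthonormalBasis ι ℝ (EuclideanSpace ℝ ι))

theorem sum_sq_dotProduct (x : ι → ℝ) : ∑ k, (⇑(b k) ⬝ᵥ x) ^ 2 = ∑ i, x i ^ 2 := by
  have h := b.sum_sq_inner_right (WithLp.toLp 2 x)
  simp only [EuclideanSpace.norm_sq_eq, Real.norm_eq_abs, sq_abs,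
    EuclideanSpace.inner_eq_star_dotProduct, star_trivial] at h
  simpa [dotProduct_comm] using h

theorem dotProduct_self (k : ι) : ⇑(b k) ⬝ᵥ ⇑(b k) = 1 := by
  have h : inner ℝ (b k) (b k) = 1 := by
    rw [real_inner_self_eq_norm_sq, b.orthonormal.1 k, one_pow]
  rwa [EuclideanSpace.inner_eq_star_dotProduct, star_trivial] at h

end OrthonormalBasis

namespace Matrix

variable {n : Type*} [Fintype n] [DecidableEq n] {A : Matrix n n ℝ}

theorem PosSemidef.trace_sqrt (hA : A.PosSemidef) :
    hA.sqrt.trace = ∑ k, √(hA.1.eigenvalues k) := by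
  rw [PosSemidef.sqrt, trace_mul_cycle, mem_unitaryGroup_iff'.mp hA.1.eigenvectorUnitary.2,
    one_mul, trace_diagonal]
  rfl

theorem IsHermitian.eigenvectorBasis_dotProduct_mulVec (hA : A.IsHermitian) (k : n) :
    ⇑(hA.eigenvectorBasis k) ⬝ᵥ (A *ᵥ ⇑(hA.eigenvectorBasis k)) = hA.eigenvalues k := by
  rw [hA.mulVec_eigenvectorBasis, dotProduct_smul, hA.eigenvectorBasis.dotProduct_self,
    smul_eq_mul, mul_one]

end Matrix

theorem Finset.card_mul_sq_mean_sub_le_sum_sq_sub {ι : Type*} (s : Finset ι) (x : ι → ℝ)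
    (c : ℝ) : (#s : ℝ) * (1 / #s * ∑ i ∈ s, x i - c) ^ 2 ≤ ∑ i ∈ s, (x i - c) ^ 2 := by
  rcases s.eq_empty_or_nonempty with rfl | hs
  · simp
  have hcard : (0 : ℝ) < #s := by exact_mod_cast hs.card_pos
  have hCS := sq_sum_le_card_mul_sum_sq (s := s) (f := fun i => x i - c)
  rw [Finset.sum_sub_distrib, Finset.sum_const, nsmul_eq_mul] at hCS
  have hmean : (#s : ℝ) * (1 / #s * ∑ i ∈ s, x i - c) = ∑ i ∈ s, x i - #s * c := by
    field_simp
  rw [← mul_le_mul_iff_of_pos_left hcard, ← mul_assoc, ← sq, ← mul_pow, hmean]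
  exact hCS

namespace ProbabilityTheory

variable {Ω : Type*} [MeasurableSpace Ω] {P : Measure Ω} {X Y : Ω → ℝ}

theorem covariance_le_sqrt_variance_mul [IsFiniteMeasure P] (hX : MemLp X 2 P)
    (hY : MemLp Y 2 P) : cov[X, Y; P] ≤ √(Var[X; P] * Var[Y; P]) := by
  have hquad : ∀ t : ℝ, 0 ≤ Var[X; P] * (t * t) + 2 * cov[X, Y; P] * t + Var[Y; P] := by
    intro t
    have h := variance_nonneg (t • X + Y) P
    rw [variance_add (hX.const_smul t) hY, variance_smul, covariance_smul_left] at h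
    linarith
  have hdisc := discrim_le_zero hquad
  rw [discrim] at hdisc
  exact (le_abs_self _).trans (Real.abs_le_sqrt (by linarith))

theorem sq_sqrt_variance_sub_le_variance_sub [IsFiniteMeasure P] (hX : MemLp X 2 P)
    (hY : MemLp Y 2 P) : (√Var[X; P] - √Var[Y; P]) ^ 2 ≤ Var[X - Y; P] := by
  have hcov := covariance_le_sqrt_variance_mul hX hY
  rw [Real.sqrt_mul (variance_nonneg X P)] at hcov
  rw [variance_sub hX hY, sub_sq, Real.sq_sqrt (variance_nonneg X P),
    Real.sq_sqrt (variance_nonneg Y P)]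
  linarith

theorem sq_integral_sub_add_sq_sqrt_variance_sub_le [IsProbabilityMeasure P]
    (hX : MemLp X 2 P) (hY : MemLp Y 2 P) :
    (P[X] - P[Y]) ^ 2 + (√Var[X; P] - √Var[Y; P]) ^ 2 ≤ ∫ ω, (X ω - Y ω) ^ 2 ∂P := by
  have h := variance_eq_sub (hX.sub hY)
  simp only [Pi.sub_apply, Pi.pow_apply] at h
  rw [integral_sub (hX.integrable one_le_two) (hY.integrable one_le_two)] at h
  have := sq_sqrt_variance_sub_le_variance_sub hX hY
  linarith

theorem integral_sq_eq_variance_add_sq [IsProbabilityMeasure P] (hX : MemLp X 2 P) :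
    ∫ ω, X ω ^ 2 ∂P = Var[X; P] + P[X] ^ 2 := by
  rw [variance_eq_sub hX]
  simp

end ProbabilityTheory

noncomputable def covMatrix {ι : Type*} (q : Measure (ι → ℝ)) : Matrix ι ι ℝ :=
  Matrix.of fun i j => cov[fun x => x i, fun x => x j; q]

section RandomVector

variable {ι Ω : Type*} [Fintype ι] [MeasurableSpace Ω] {P : Measure Ω} {X : Ω → ι → ℝ}

theorem memLp_apply_of_integrable_sum_sq {q : Measure (ι → ℝ)}
    (hq : Integrable (fun x => ∑ i, x i ^ 2) q) (i : ι) : MemLp (fun x => x i) 2 q := by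
  have hmeas : Measurable fun x : ι → ℝ => x i := measurable_pi_apply i
  refine (memLp_two_iff_integrable_sq hmeas.aestronglyMeasurable).2
    (hq.mono' (hmeas.pow_const 2).aestronglyMeasurable ?_)
  refine Filter.Eventually.of_forall fun x => ?_
  rw [Real.norm_eq_abs, abs_of_nonneg (sq_nonneg _)]
  exact Finset.single_le_sum (f := fun j => x j ^ 2) (fun j _ => sq_nonneg _)
    (Finset.mem_univ i)

theorem memLp_dotProduct (hX : ∀ i, MemLp (fun ω => X ω i) 2 P) (v : ι → ℝ) :
    MemLp (fun ω => v ⬝ᵥ X ω) 2 P :=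
  memLp_finsetSum _ fun i _ => (hX i).const_mul (v i)

theorem integral_dotProduct (hX : ∀ i, Integrable (fun ω => X ω i) P) (v : ι → ℝ) :
    ∫ ω, v ⬝ᵥ X ω ∂P = v ⬝ᵥ fun i => ∫ ω, X ω i ∂P := by
  simp only [dotProduct]
  rw [integral_finsetSum _ fun i _ => (hX i).const_mul (v i)]
  simp only [integral_const_mul]

theorem variance_dotProduct {q : Measure (ι → ℝ)} [IsFiniteMeasure q]
    (hq : ∀ i, MemLp (fun x => x i) 2 q) (v : ι → ℝ) :
    Var[fun x => v ⬝ᵥ x; q] = v ⬝ᵥ (covMatrix q *ᵥ v) := by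
  simp only [dotProduct]
  rw [variance_fun_sum fun i => (hq i).const_mul (v i)]
  simp only [covariance_const_mul_left, covariance_const_mul_right, Matrix.mulVec, dotProduct,
    covMatrix, Matrix.of_apply, Finset.mul_sum]
  refine Finset.sum_congr rfl fun i _ => Finset.sum_congr rfl fun j _ => ?_
  ring

theorem sum_sq_integral_sub_add_le_integral_sum_sq_sub [IsProbabilityMeasure P]
    {Y : Ω → ι → ℝ} (hX : ∀ i, MemLp (fun ω => X ω i) 2 P) (hY : ∀ i, MemLp (fun ω => Y ω i) 2 P)
    (b : OrthonormalBasis ι ℝ (EuclideanSpace ℝ ι)) :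
    ∑ i, ((∫ ω, Y ω i ∂P) - ∫ ω, X ω i ∂P) ^ 2
      + ∑ k, (√Var[fun ω => ⇑(b k) ⬝ᵥ Y ω; P] - √Var[fun ω => ⇑(b k) ⬝ᵥ X ω; P]) ^ 2
      ≤ ∫ ω, ∑ i, (X ω i - Y ω i) ^ 2 ∂P := by
  have hmean : ∑ i, ((∫ ω, Y ω i ∂P) - ∫ ω, X ω i ∂P) ^ 2
      = ∑ k, ((∫ ω, ⇑(b k) ⬝ᵥ Y ω ∂P) - ∫ ω, ⇑(b k) ⬝ᵥ X ω ∂P) ^ 2 := by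
    rw [← b.sum_sq_dotProduct]
    simp only [integral_dotProduct (fun i => (hX i).integrable one_le_two),
      integral_dotProduct (fun i => (hY i).integrable one_le_two), ← dotProduct_sub]
    rfl
  have hcost : ∀ ω, ∑ i, (X ω i - Y ω i) ^ 2 = ∑ k, (⇑(b k) ⬝ᵥ Y ω - ⇑(b k) ⬝ᵥ X ω) ^ 2 :=
    fun ω => by
      simp only [← dotProduct_sub]
      rw [b.sum_sq_dotProduct]
      simp only [Pi.sub_apply, sub_sq_comm (X ω _)]
  have hdiff : ∀ k, MemLp (fun ω => ⇑(b k) ⬝ᵥ Y ω - ⇑(b k) ⬝ᵥ X ω) 2 P := fun k =>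
    (memLp_dotProduct hY _).sub (memLp_dotProduct hX _)
  simp only [hmean, hcost]
  rw [integral_finsetSum _ fun k _ => (hdiff k).integrable_sq, ← Finset.sum_add_distrib]
  exact Finset.sum_le_sum fun k _ =>
    sq_integral_sub_add_sq_sqrt_variance_sub_le (memLp_dotProduct hY _) (memLp_dotProduct hX _)

end RandomVector

section Wasserstein

variable {d : ℕ} {p q : Measure (Fin d → ℝ)}

theorem W2sq_le_integral_of_coupling (ν : Measure ((Fin d → ℝ) × (Fin d → ℝ)))
    [IsProbabilityMeasure ν] (hfst : ν.map Prod.fst = p) (hsnd : ν.map Prod.snd = q) :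
    W2sq p q ≤ ∫ z, ∑ i, (z.1 i - z.2 i) ^ 2 ∂ν := by
  refine csInf_le ⟨0, ?_⟩ ⟨ν, inferInstance, hfst, hsnd, rfl⟩
  rintro r ⟨ν', -, -, -, rfl⟩
  exact integral_nonneg fun z => Finset.sum_nonneg fun i _ => sq_nonneg _

theorem le_W2sq_of_forall_coupling [IsProbabilityMeasure p] [IsProbabilityMeasure q] {c : ℝ}
    (h : ∀ ν : Measure ((Fin d → ℝ) × (Fin d → ℝ)), IsProbabilityMeasure ν →
      ν.map Prod.fst = p → ν.map Prod.snd = q → c ≤ ∫ z, ∑ i, (z.1 i - z.2 i) ^ 2 ∂ν) :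
    c ≤ W2sq p q := by
  refine le_csInf ⟨_, p.prod q, inferInstance, by simp, by simp, rfl⟩ ?_
  rintro r ⟨ν, hν, hfst, hsnd, rfl⟩
  exact h ν hν hfst hsnd

theorem le_W2sq_of_orthonormalBasis [IsProbabilityMeasure p] [IsProbabilityMeasure q]
    (hp : ∀ i, MemLp (fun x => x i) 2 p) (hq : ∀ i, MemLp (fun y => y i) 2 q)
    (b : OrthonormalBasis (Fin d) ℝ (EuclideanSpace ℝ (Fin d))) :
    ∑ i, ((∫ y, y i ∂q) - ∫ x, x i ∂p) ^ 2
      + ∑ k, (√Var[fun y => ⇑(b k) ⬝ᵥ y; q] - √Var[fun x => ⇑(b k) ⬝ᵥ x; p]) ^ 2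
      ≤ W2sq p q := by
  refine le_W2sq_of_forall_coupling fun ν _ hfst hsnd => ?_
  subst hfst hsnd
  have hmean : ∀ (g : (Fin d → ℝ) × (Fin d → ℝ) → Fin d → ℝ), Measurable g →
      ∀ i, ∫ x, x i ∂(ν.map g) = ∫ z, g z i ∂ν := fun g hg i =>
    integral_map hg.aemeasurable (measurable_pi_apply i).aestronglyMeasurable
  have hvar : ∀ (g : (Fin d → ℝ) × (Fin d → ℝ) → Fin d → ℝ), Measurable g →
      ∀ v : Fin d → ℝ, Var[fun x => v ⬝ᵥ x; ν.map g] = Var[fun z => v ⬝ᵥ g z; ν] :=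
    fun g hg v => variance_map (by fun_prop) hg.aemeasurable
  simp only [hmean Prod.fst measurable_fst, hmean Prod.snd measurable_snd,
    hvar Prod.fst measurable_fst, hvar Prod.snd measurable_snd]
  exact sum_sq_integral_sub_add_le_integral_sum_sq_sub
    (fun i => (hp i).comp_of_map (by fun_prop)) (fun i => (hq i).comp_of_map (by fun_prop)) b

end Wasserstein

section LocationScale

variable {d : ℕ} {f : Measure (Fin d → ℝ)}

instance isProbabilityMeasure_locScaleFam [IsProbabilityMeasure f] (c : Fin d → ℝ) (s : ℝ) :
    IsProbabilityMeasure (locScaleFam f c s) :=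
  Measure.isProbabilityMeasure_map (by fun_prop)

theorem memLp_apply_locScaleFam [IsFiniteMeasure f] (hf : ∀ i, MemLp (fun z => z i) 2 f)
    (c : Fin d → ℝ) (s : ℝ) (i : Fin d) : MemLp (fun x => x i) 2 (locScaleFam f c s) :=
  (memLp_map_measure_iff (measurable_pi_apply i).aestronglyMeasurable (by fun_prop)).2
    (((hf i).const_mul s).add (memLp_const (c i)))

theorem integral_apply_locScaleFam [IsProbabilityMeasure f]
    (hf : ∀ i, Integrable (fun z => z i) f) (c : Fin d → ℝ) (s : ℝ) (i : Fin d) :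
    ∫ x, x i ∂(locScaleFam f c s) = s * ∫ z, z i ∂f + c i := by
  rw [locScaleFam, integral_map (by fun_prop) (continuous_apply i).aestronglyMeasurable]
  simp only [Pi.add_apply, Pi.smul_apply, smul_eq_mul]
  rw [integral_add ((hf i).const_mul s) (integrable_const _), integral_const_mul]
  simp

theorem variance_dotProduct_locScaleFam [IsProbabilityMeasure f]
    (hf : ∀ i, MemLp (fun z => z i) 2 f) (hfI : covMatrix f = 1) (v c : Fin d → ℝ) (s : ℝ) :
    Var[fun x => v ⬝ᵥ x; locScaleFam f c s] = s ^ 2 * (v ⬝ᵥ v) := by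
  rw [locScaleFam, variance_map (by fun_prop) (by fun_prop)]
  simp only [Function.comp_def, dotProduct_add, dotProduct_smul, smul_eq_mul]
  rw [variance_add_const (by fun_prop), variance_const_mul, variance_dotProduct hf, hfI,
    Matrix.one_mulVec]

theorem integral_sum_sq_locScaleFam [IsProbabilityMeasure f]
    (hf : ∀ i, MemLp (fun z => z i) 2 f) (hf0 : ∀ i, ∫ z, z i ∂f = 0) (hfI : covMatrix f = 1)
    (c : Fin d → ℝ) (s : ℝ) :
    ∫ x, ∑ i, x i ^ 2 ∂(locScaleFam f c s) = d * s ^ 2 + ∑ i, c i ^ 2 := by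
  have hcoord : ∀ i, ∫ x, x i ^ 2 ∂(locScaleFam f c s) = s ^ 2 + c i ^ 2 := by
    intro i
    have hvar := variance_dotProduct_locScaleFam hf hfI (Pi.single i 1) c s
    simp only [single_one_dotProduct, Pi.single_eq_same, mul_one] at hvar
    rw [integral_sq_eq_variance_add_sq (memLp_apply_locScaleFam hf c s i), hvar,
      integral_apply_locScaleFam (fun i => (hf i).integrable one_le_two), hf0, mul_zero, zero_add]
  rw [integral_finsetSum _ fun i _ => (memLp_apply_locScaleFam hf c s i).integrable_sq]
  simp [hcoord, Finset.sum_add_distrib]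

theorem W2sq_locScaleFam_le [IsProbabilityMeasure f] (hf : ∀ i, MemLp (fun z => z i) 2 f)
    (hf0 : ∀ i, ∫ z, z i ∂f = 0) (hfI : covMatrix f = 1) (μ m : Fin d → ℝ) (σ σ' : ℝ) :
    W2sq (locScaleFam f μ σ) (locScaleFam f m σ') ≤ ∑ i, (m i - μ i) ^ 2 + d * (σ' - σ) ^ 2 := by
  have hT : Measurable fun z : Fin d → ℝ => (σ • z + μ, σ' • z + m) := by fun_prop
  have := Measure.isProbabilityMeasure_map (μ := f) hT.aemeasurable
  refine (W2sq_le_integral_of_coupling (f.map fun z => (σ • z + μ, σ' • z + m))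
    (by rw [Measure.map_map measurable_fst hT]; rfl)
    (by rw [Measure.map_map measurable_snd hT]; rfl)).trans_eq ?_
  rw [integral_map hT.aemeasurable (by fun_prop)]
  calc ∫ z, ∑ i, ((σ • z + μ) i - (σ' • z + m) i) ^ 2 ∂f
      = ∫ x, ∑ i, x i ^ 2 ∂(locScaleFam f (m - μ) (σ' - σ)) := by
        rw [locScaleFam, integral_map (by fun_prop)
          (by fun_prop : Continuous fun x : Fin d → ℝ => ∑ i, x i ^ 2).aestronglyMeasurable]
        refine integral_congr_ae (Filter.Eventually.of_forall fun z => ?_)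
        refine Finset.sum_congr rfl fun i _ => ?_
        simp only [Pi.add_apply, Pi.sub_apply, Pi.smul_apply, smul_eq_mul]
        ring
    _ = ∑ i, (m i - μ i) ^ 2 + d * (σ' - σ) ^ 2 := by
        rw [integral_sum_sq_locScaleFam hf hf0 hfI]
        simp only [Pi.sub_apply]
        ring

theorem le_W2sq_locScaleFam [IsProbabilityMeasure f] (hf : ∀ i, MemLp (fun z => z i) 2 f)
    (hf0 : ∀ i, ∫ z, z i ∂f = 0) (hfI : covMatrix f = 1) (μ : Fin d → ℝ) {σ : ℝ} (hσ : 0 ≤ σ)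
    (q : Measure (Fin d → ℝ)) [IsProbabilityMeasure q] (hq : ∀ i, MemLp (fun y => y i) 2 q)
    (b : OrthonormalBasis (Fin d) ℝ (EuclideanSpace ℝ (Fin d))) :
    ∑ i, ((∫ y, y i ∂q) - μ i) ^ 2 + ∑ k, (√Var[fun y => ⇑(b k) ⬝ᵥ y; q] - σ) ^ 2
      ≤ W2sq (locScaleFam f μ σ) q := by
  have h := le_W2sq_of_orthonormalBasis (memLp_apply_locScaleFam hf μ σ) hq b
  simpa only [integral_apply_locScaleFam (fun i => (hf i).integrable one_le_two), hf0, mul_zero,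
    zero_add, variance_dotProduct_locScaleFam hf hfI, b.dotProduct_self, mul_one,
    Real.sqrt_sq hσ] using h

end LocationScale

/-- For a location-scale family, any predictive density `q` with mean `m` and covariance
`Σ̂` is dominated pointwise by the plug-in density `p(·|m, σ̂)` with
`σ̂ = (1/d) tr(Σ̂^{1/2})`. -/
theorem plugin_dominates_locScale {d : ℕ} (f : Measure (Fin d → ℝ)) [IsProbabilityMeasure f]
    (hf2 : Integrable (fun z => ∑ i, z i ^ 2) f)
    (hf0 : ∀ i, (∫ z, z i ∂f) = 0)
    (hfI : ∀ i j, (∫ z, z i * z j ∂f) = if i = j then (1 : ℝ) else 0)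
    (μ : Fin d → ℝ) {σ : ℝ} (hσ : 0 < σ)
    (q : Measure (Fin d → ℝ)) [IsProbabilityMeasure q]
    (hq2 : Integrable (fun y => ∑ i, y i ^ 2) q)
    (m : Fin d → ℝ) (hm : ∀ i, m i = ∫ y, y i ∂q)
    (Shat : Matrix (Fin d) (Fin d) ℝ)
    (hShat : ∀ i j, Shat i j = ∫ y, (y i - m i) * (y j - m j) ∂q)
    (hps : Shat.PosSemidef)
    (σhat : ℝ) (hσhat : σhat = (1 / (d : ℝ)) * hps.sqrt.trace) :
    W2sq (locScaleFam f μ σ) q ≥ (∑ i, (m i - μ i) ^ 2) + d * (σhat - σ) ^ 2 ∧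
    W2sq (locScaleFam f μ σ) (locScaleFam f m σhat)
      = (∑ i, (m i - μ i) ^ 2) + d * (σhat - σ) ^ 2 := by
  have hf := memLp_apply_of_integrable_sum_sq hf2
  have hq := memLp_apply_of_integrable_sum_sq hq2
  have hcovf : covMatrix f = 1 := by
    ext i j
    simp [covMatrix, covariance, hf0, hfI, Matrix.one_apply]
  have hcovq : covMatrix q = Shat := by
    ext i j
    simp [covMatrix, covariance, ← hm, hShat]
  set b := hps.1.eigenvectorBasis
  have hvar : ∀ k, Var[fun y => ⇑(b k) ⬝ᵥ y; q] = hps.1.eigenvalues k := fun k => by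
    rw [variance_dotProduct hq, hcovq, hps.1.eigenvectorBasis_dotProduct_mulVec]
  rw [hps.trace_sqrt] at hσhat
  have hσhat0 : 0 ≤ σhat := by
    rw [hσhat]
    positivity
  refine ⟨?_, le_antisymm (W2sq_locScaleFam_le hf hf0 hcovf μ m σ σhat) ?_⟩
  · calc (∑ i, (m i - μ i) ^ 2) + d * (σhat - σ) ^ 2
        ≤ ∑ i, (m i - μ i) ^ 2 + ∑ k, (√(hps.1.eigenvalues k) - σ) ^ 2 := by
          have hmean := Finset.univ.card_mul_sq_mean_sub_le_sum_sq_sub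
            (fun k => √(hps.1.eigenvalues k)) σ
          rw [Finset.card_univ, Fintype.card_fin] at hmean
          rw [hσhat]
          gcongr
      _ ≤ W2sq (locScaleFam f μ σ) q := by
          simpa only [hvar, ← hm] using le_W2sq_locScaleFam hf hf0 hcovf μ hσ.le q hq b
  · have h := le_W2sq_locScaleFam hf hf0 hcovf μ hσ.le _ (memLp_apply_locScaleFam hf m σhat) b
    simpa [integral_apply_locScaleFam (fun i => (hf i).integrable one_le_two), hf0,
      variance_dotProduct_locScaleFam hf hcovf, b.dotProduct_self, Real.sqrt_sq hσhat0] using h
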